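/- arXiv:2406.03969 — 4 statements merged into one kernel-verified Lean document; each statement's English description precedes it below -/
import Mathlib

section
/- The random algebra has no points: there is no Boolean algebra homomorphism from the quotient of Borel sets of [0,1] by null sets to the two-element Boolean algebra that preserves countable suprema. -/
/-!
A σ-point `f` of the measure algebra of `μ` selects a piece of every countable measurable cover
of almost all of the space. If for every `n` the space has a countable cover by sets of measure
at most `1/n` (for `[0,1]`: intervals), the pieces `Tₙ` selected from these covers have a null
intersection, so the complements `Tₙᶜ` cover almost everything and `f` selects some `Tₙᶜ` too.
But `f` preserves meets and `Tₙ ⊓ Tₙᶜ = ⊥`.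
-/

open MeasureTheory

/-- Borel subsets of the unit interval. -/
abbrev BorelUnitInterval := {s : Set (Set.Icc (0:ℝ) 1) // MeasurableSet s}

/-- Identify two Borel sets when their symmetric difference is Lebesgue-null. -/
instance nullSetoid : Setoid BorelUnitInterval :=
  ⟨fun s t => (s : Set (Set.Icc (0:ℝ) 1)) =ᵐ[volume] (t : Set (Set.Icc (0:ℝ) 1)),
    ⟨fun _ => Filter.EventuallyEq.rfl, Filter.EventuallyEq.symm, Filter.EventuallyEq.trans⟩⟩

/-- The random algebra: Borel sets of `[0,1]` modulo Lebesgue-null sets. -/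
def RandomAlgebra := Quotient nullSetoid

open Set

section MeasureAlgebra

variable {α L : Type*} [MeasurableSpace α] [CompleteLattice L]

/-- `mk` identifies `L` with the measure algebra of `μ`: measurable sets modulo null sets,
ordered by inclusion up to null sets. -/
structure IsMeasureAlgebraQuotientMap (μ : Measure α) (mk : {s : Set α // MeasurableSet s} → L) :
    Prop where
  surjective : Function.Surjective mk
  le_iff : ∀ s t, mk s ≤ mk t ↔ μ (s.1 \ t.1) = 0

/-- A point of the σ-locale `L`; preservation of binary joins follows from `map_iSup`. -/
structure IsSigmaPoint (f : L → Bool) : Prop where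
  map_top : f ⊤ = true
  map_bot : f ⊥ = false
  map_inf : ∀ a b, f (a ⊓ b) = (f a && f b)
  map_iSup : ∀ g : ℕ → L, f (⨆ n, g n) = true ↔ ∃ n, f (g n) = true

namespace IsMeasureAlgebraQuotientMap

variable {μ : Measure α} {mk : {s : Set α // MeasurableSet s} → L}

theorem mk_univ (h : IsMeasureAlgebraQuotientMap μ mk) : mk ⟨univ, .univ⟩ = ⊤ := by
  obtain ⟨t, ht⟩ := h.surjective ⊤
  exact top_le_iff.1 (ht ▸ (h.le_iff t _).2 (by simp))

theorem mk_empty (h : IsMeasureAlgebraQuotientMap μ mk) : mk ⟨∅, .empty⟩ = ⊥ := by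
  obtain ⟨t, ht⟩ := h.surjective ⊥
  exact le_bot_iff.1 (ht ▸ (h.le_iff _ t).2 (by simp))

theorem mk_eq_top_iff (h : IsMeasureAlgebraQuotientMap μ mk) (s : {s : Set α // MeasurableSet s}) :
    mk s = ⊤ ↔ μ s.1ᶜ = 0 := by
  rw [← top_le_iff, ← h.mk_univ, h.le_iff, ← compl_eq_univ_sdiff]

theorem mk_eq_bot_iff (h : IsMeasureAlgebraQuotientMap μ mk) (s : {s : Set α // MeasurableSet s}) :
    mk s = ⊥ ↔ μ s.1 = 0 := by
  rw [← le_bot_iff, ← h.mk_empty, h.le_iff, sdiff_empty]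

theorem mk_iUnion (h : IsMeasureAlgebraQuotientMap μ mk) {ι : Type*} [Countable ι]
    (g : ι → {s : Set α // MeasurableSet s}) :
    mk ⟨⋃ i, (g i).1, .iUnion fun i => (g i).2⟩ = ⨆ i, mk (g i) := by
  refine le_antisymm ?_ (iSup_le fun i => (h.le_iff _ _).2 (by simp [sdiff_eq_empty.2 (subset_iUnion (fun i => (g i).1) i)]))
  obtain ⟨u, hu⟩ := h.surjective (⨆ i, mk (g i))
  have hle : ∀ i, μ ((g i).1 \ u.1) = 0 := fun i => (h.le_iff _ u).1 (hu ▸ le_iSup (fun i => mk (g i)) i)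
  rw [← hu, h.le_iff, iUnion_sdiff]
  exact measure_iUnion_null hle

theorem mk_inter (h : IsMeasureAlgebraQuotientMap μ mk) (s t : {s : Set α // MeasurableSet s}) :
    mk ⟨s.1 ∩ t.1, s.2.inter t.2⟩ = mk s ⊓ mk t := by
  refine le_antisymm (le_inf ((h.le_iff _ _).2 (by simp [sdiff_eq_empty.2 inter_subset_left]))
    ((h.le_iff _ _).2 (by simp [sdiff_eq_empty.2 inter_subset_right]))) ?_
  obtain ⟨u, hu⟩ := h.surjective (mk s ⊓ mk t)
  have hs : μ (u.1 \ s.1) = 0 := (h.le_iff u s).1 (hu ▸ inf_le_left)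
  have ht : μ (u.1 \ t.1) = 0 := (h.le_iff u t).1 (hu ▸ inf_le_right)
  rw [← hu, h.le_iff, sdiff_inter]
  exact measure_union_null hs ht

theorem exists_apply_eq_true_of_ae_cover (h : IsMeasureAlgebraQuotientMap μ mk) {f : L → Bool}
    (hf : IsSigmaPoint f) (g : ℕ → {s : Set α // MeasurableSet s})
    (hg : μ (⋃ n, (g n).1)ᶜ = 0) : ∃ n, f (mk (g n)) = true := by
  rw [← hf.map_iSup, ← h.mk_iUnion, (h.mk_eq_top_iff _).2 hg, hf.map_top]

theorem not_isSigmaPoint (h : IsMeasureAlgebraQuotientMap μ mk)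
    (hcover : ∀ ε > 0, ∃ g : ℕ → {s : Set α // MeasurableSet s},
      ⋃ k, (g k).1 = univ ∧ ∀ k, μ (g k).1 ≤ ε)
    (f : L → Bool) : ¬ IsSigmaPoint f := by
  intro hf
  choose g hg_cover hg_small using fun n : ℕ => hcover (n : ENNReal)⁻¹ (by simp)
  choose k hk using fun n =>
    h.exists_apply_eq_true_of_ae_cover hf (g n) (by simp [hg_cover n])
  set T := fun n => g n (k n)
  have hT_null : μ (⋂ n, (T n).1) = 0 := by
    by_contra hpos
    obtain ⟨n, hn⟩ := ENNReal.exists_inv_nat_lt hpos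
    exact (hn.trans_le (measure_mono (iInter_subset _ n))).not_ge (hg_small n (k n))
  obtain ⟨n, hn⟩ := h.exists_apply_eq_true_of_ae_cover hf (fun n => ⟨(T n).1ᶜ, (T n).2.compl⟩)
    (by simpa [← compl_iInter] using hT_null)
  have hmeet := hf.map_inf (mk (T n)) (mk ⟨(T n).1ᶜ, (T n).2.compl⟩)
  rw [← h.mk_inter, (h.mk_eq_bot_iff _).2 (by simp), hf.map_bot, hk n, hn] at hmeet
  exact Bool.false_ne_true hmeet

end IsMeasureAlgebraQuotientMap

end MeasureAlgebra

theorem exists_cover_unitInterval_measure_le (ε : ENNReal) (hε : 0 < ε) :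
    ∃ g : ℕ → BorelUnitInterval,
      ⋃ k, (g k : Set (Icc (0:ℝ) 1)) = univ ∧ ∀ k, volume (g k : Set (Icc (0:ℝ) 1)) ≤ ε := by
  obtain ⟨δ, -, hδ_pos, hδ_le⟩ := ENNReal.lt_iff_exists_real_btwn.1 hε
  have hδ : 0 < δ := ENNReal.ofReal_pos.1 hδ_pos
  refine ⟨fun k => ⟨Subtype.val ⁻¹' Icc (k * δ) ((k + 1) * δ),
    measurableSet_Icc.preimage measurable_subtype_coe⟩, ?_, fun k => ?_⟩
  · refine eq_univ_of_forall fun x => mem_iUnion.2 ⟨⌊(x : ℝ) / δ⌋₊, ?_, ?_⟩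
    · exact (le_div_iff₀ hδ).1 (Nat.floor_le (div_nonneg x.2.1 hδ.le))
    · exact (div_le_iff₀ hδ).1 (Nat.lt_floor_add_one _).le
  · calc volume (Subtype.val ⁻¹' Icc (k * δ) ((k + 1) * δ) : Set (Icc (0:ℝ) 1))
        ≤ volume (Icc (k * δ) ((k + 1) * δ)) := by
          rw [volume_preimage_coe measurableSet_Icc.nullMeasurableSet measurableSet_Icc]
          exact measure_mono inter_subset_left
      _ = ENNReal.ofReal δ := by rw [Real.volume_Icc]; congr 1; ring
      _ ≤ ε := hδ_le.le

/-- The random algebra has no points: for any complete Boolean algebra structure on it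
inducing the almost-everywhere order, there is no Boolean homomorphism to the
two-element Boolean algebra preserving countable suprema. -/
theorem randomAlgebra_has_no_points
    [inst : CompleteBooleanAlgebra RandomAlgebra]
    (hord : ∀ s t : BorelUnitInterval,
      (@LE.le RandomAlgebra _ (Quotient.mk nullSetoid s) (Quotient.mk nullSetoid t) ↔
        volume ((s : Set (Set.Icc (0:ℝ) 1)) \ (t : Set (Set.Icc (0:ℝ) 1))) = 0)) :
    ¬ ∃ f : RandomAlgebra → Bool,
        f ⊤ = true ∧ f ⊥ = false ∧
        (∀ a b, f (a ⊓ b) = (f a && f b)) ∧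
        (∀ a b, f (a ⊔ b) = (f a || f b)) ∧
        (∀ g : ℕ → RandomAlgebra, (f (⨆ n, g n) = true ↔ ∃ n, f (g n) = true)) := by
  rintro ⟨f, map_top, map_bot, map_inf, -, map_iSup⟩
  have hmk : IsMeasureAlgebraQuotientMap (L := RandomAlgebra) volume (Quotient.mk nullSetoid) :=
    ⟨Quotient.mk_surjective, hord⟩
  exact hmk.not_isSigmaPoint exists_cover_unitInterval_measure_le f ⟨map_top, map_bot, map_inf, map_iSup⟩
end

section
/- A presheaf of sets on a complete Boolean algebra B is a sheaf (for the canonical sup-topology) if and only if it carries disjoint joins to products. -/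
universe u v

/-- A set-valued presheaf on a complete Boolean algebra (viewed as the frame of a
Boolean locale). -/
structure SetPresheaf (B : Type u) [CompleteBooleanAlgebra B] where
  obj : B → Type v
  res : ∀ {U V : B}, U ≤ V → obj V → obj U
  res_refl : ∀ {U : B} (x : obj U), res le_rfl x = x
  res_comp : ∀ {U V W : B} (h1 : U ≤ V) (h2 : V ≤ W) (x : obj W),
    res h1 (res h2 x) = res (h1.trans h2) x

namespace SetPresheaf

variable {B : Type u} [CompleteBooleanAlgebra B] (F : SetPresheaf.{u, v} B)

/-- The sheaf condition for a presheaf on a locale: the value at `⊥` is a singleton,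
binary gluing squares are pullbacks, and directed joins go to limits. -/
def IsSheaf : Prop :=
  (Nonempty (F.obj ⊥) ∧ Subsingleton (F.obj ⊥)) ∧
  (∀ V V' : B, Function.Bijective
    (fun x : F.obj (V ⊔ V') =>
      (⟨(F.res le_sup_left x, F.res le_sup_right x),
        by rw [F.res_comp, F.res_comp]⟩ :
        {p : F.obj V × F.obj V' //
          F.res inf_le_left p.1 = F.res inf_le_right p.2}))) ∧
  (∀ D : Set B, DirectedOn (· ≤ ·) D → Function.Bijective
    (fun x : F.obj (sSup D) =>
      (⟨fun U : D => F.res (le_sSup U.2) x,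
        by intro U V h; rw [F.res_comp]⟩ :
        {f : ∀ U : D, F.obj U //
          ∀ (U V : D) (h : (U : B) ≤ (V : B)), F.res h (f V) = f U})))

/-- A presheaf carries disjoint joins to products if for every pairwise disjoint
family, the canonical map to the product of the values is a bijection. -/
def CarriesDisjointJoinsToProducts : Prop :=
  ∀ (I : Type u) (a : I → B), (Pairwise fun i j => a i ⊓ a j = ⊥) →
    Function.Bijective
      (fun (x : F.obj (⨆ i, a i)) (i : I) => F.res (le_iSup a i) x)

end SetPresheaf

/-!
Both conditions are equivalent to the classical sheaf condition: every matching family on an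
arbitrary cover has a unique gluing. A sheaf in the sense of `IsSheaf` glues finite covers by
induction on the binary condition, and arbitrary covers as the directed join of their finite
subjoins. A presheaf carrying disjoint joins to products glues an arbitrary cover `a` through its
disjoint refinement `a i \ ⨆ j < i, a j` (for a well-order of the index set), which has the same
join; conversely disjoint families are automatically matching because `F ⊥` is a point.
-/

open Function

namespace SetPresheaf

variable {B : Type u} [CompleteBooleanAlgebra B]

section Disjointed

variable {I : Type*} (r : I → I → Prop) (a : I → B)

def disjointedBy (i : I) : B :=
  a i \ ⨆ j : {j // r j i}, a j

theorem disjointedBy_le (i : I) : disjointedBy r a i ≤ a i :=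
  sdiff_le

theorem pairwise_disjoint_disjointedBy [Std.Trichotomous r] :
    Pairwise (Disjoint on (disjointedBy r a)) := by
  have key : ∀ i j, r i j → Disjoint (disjointedBy r a i) (disjointedBy r a j) := fun i j hij =>
    disjoint_sdiff_self_right.mono_left
      ((disjointedBy_le r a i).trans (le_iSup (fun k : {k // r k j} => a k) ⟨i, hij⟩))
  intro i j hij
  rcases trichotomous_of r i j with h | h | h
  exacts [key i j h, (hij h).elim, (key j i h).symm]

theorem iSup_disjointedBy [IsWellFounded I r] :
    ⨆ i, disjointedBy r a i = ⨆ i, a i := by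
  refine le_antisymm (iSup_mono (disjointedBy_le r a)) (iSup_le fun i => ?_)
  induction i using IsWellFounded.induction r with
  | ind i ih =>
    calc a i ≤ disjointedBy r a i ⊔ ⨆ j : {j // r j i}, a j := le_sdiff_sup
      _ ≤ ⨆ i, disjointedBy r a i := sup_le (le_iSup _ i) (iSup_le fun j => ih j j.2)

end Disjointed

variable (F : SetPresheaf.{u, v} B)

theorem res_injective_of_ge {U V : B} (h : U ≤ V) (h' : V ≤ U) : Injective (F.res h) :=
  LeftInverse.injective (g := F.res h') fun x => by rw [F.res_comp, F.res_refl]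

variable {F}

theorem res_eq_res_of_res_eq {U V W : B} {hUV : U ≤ V} {x : F.obj V} {y : F.obj U}
    (h : F.res hUV x = y) (hWU : W ≤ U) (hWV : W ≤ V) : F.res hWV x = F.res hWU y := by
  rw [← h, F.res_comp]

section Gluing

variable {ι : Sort*} {a : ι → B}

variable (F) in
def IsMatching (s : ∀ i, F.obj (a i)) : Prop :=
  ∀ i j ⦃W : B⦄ (hi : W ≤ a i) (hj : W ≤ a j), F.res hi (s i) = F.res hj (s j)

variable (F) in
def IsGluing (s : ∀ i, F.obj (a i)) {U : B} (x : F.obj U) : Prop :=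
  ∀ i ⦃W : B⦄ (hWU : W ≤ U) (hWa : W ≤ a i), F.res hWU x = F.res hWa (s i)

variable (F) in
def IsSeparatedFor (a : ι → B) : Prop :=
  ∀ ⦃U : B⦄, U ≤ ⨆ i, a i → ∀ x y : F.obj U,
    (∀ i ⦃W : B⦄ (hWU : W ≤ U), W ≤ a i → F.res hWU x = F.res hWU y) → x = y

variable {s : ∀ i, F.obj (a i)} {U : B} {x : F.obj U}

theorem IsMatching.isGluing (hs : F.IsMatching s) (i : ι) : F.IsGluing s (s i) :=
  fun j _ hWU hWa => hs i j hWU hWa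

theorem IsGluing.res (hx : F.IsGluing s x) {V : B} (h : V ≤ U) : F.IsGluing s (F.res h x) :=
  fun i _ hWV hWa => by rw [F.res_comp]; exact hx i _ hWa

theorem IsGluing.res_eq (hx : F.IsGluing s x) {i : ι} (h : a i ≤ U) : F.res h x = s i :=
  (hx i h le_rfl).trans (F.res_refl _)

theorem isGluing_of_res_eq (ha : ∀ i, a i ≤ U) (hx : ∀ i, F.res (ha i) x = s i) :
    F.IsGluing s x :=
  fun i _ hWU hWa => res_eq_res_of_res_eq (hx i) hWa hWU

theorem IsGluing.isMatching (hx : F.IsGluing s x) (ha : ∀ i, a i ≤ U) : F.IsMatching s :=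
  fun i j _ hi hj => (hx i (hi.trans (ha i)) hi).symm.trans (hx j _ hj)

theorem IsSeparatedFor.eq_of_isGluing (hsep : F.IsSeparatedFor a) (hU : U ≤ ⨆ i, a i)
    {y : F.obj U} (hx : F.IsGluing s x) (hy : F.IsGluing s y) : x = y :=
  hsep hU x y fun i _ hWU hWa => (hx i hWU hWa).trans (hy i hWU hWa).symm

theorem IsSeparatedFor.mono {b : ι → B} (hsep : F.IsSeparatedFor b) (hba : ∀ i, b i ≤ a i)
    (hab : ⨆ i, a i ≤ ⨆ i, b i) : F.IsSeparatedFor a :=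
  fun _ hU x y h => hsep (hU.trans hab) x y fun i _ hWU hWb => h i hWU (hWb.trans (hba i))

theorem IsSeparatedFor.isGluing_of_isGluing_res {κ : Sort*} {b : κ → B}
    (hsep : F.IsSeparatedFor b) (hU : U ≤ ⨆ k, b k)
    (h : ∀ k ⦃W : B⦄ (hWU : W ≤ U), W ≤ b k → F.IsGluing s (F.res hWU x)) :
    F.IsGluing s x := by
  intro i W hWU hWa
  refine hsep (hWU.trans hU) _ _ fun k W' hW'W hW'b => ?_
  rw [F.res_comp, F.res_comp]
  exact (F.res_refl _).symm.trans (h k (hW'W.trans hWU) hW'b i le_rfl _)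

end Gluing

namespace IsSheaf

variable (hF : F.IsSheaf)
include hF

theorem subsingleton_of_le_bot {U : B} (hU : U ≤ ⊥) : Subsingleton (F.obj U) :=
  haveI := hF.1.2
  (F.res_injective_of_ge bot_le hU).subsingleton

theorem eq_of_le_sup {V V' U : B} (hV : V ≤ U) (hV' : V' ≤ U) (hU : U ≤ V ⊔ V')
    {x y : F.obj U} (h : F.res hV x = F.res hV y) (h' : F.res hV' x = F.res hV' y) : x = y := by
  refine F.res_injective_of_ge (sup_le hV hV') hU ((hF.2.1 V V').1 ?_)
  simp only [Subtype.mk.injEq, Prod.mk.injEq, F.res_comp]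
  exact ⟨h, h'⟩

theorem exists_res_eq_of_res_eq {V V' : B} (u : F.obj V) (u' : F.obj V')
    (h : F.res inf_le_left u = F.res inf_le_right u') :
    ∃ x : F.obj (V ⊔ V'), F.res le_sup_left x = u ∧ F.res le_sup_right x = u' := by
  obtain ⟨x, hx⟩ := (hF.2.1 V V').2 ⟨(u, u'), h⟩
  simp only [Subtype.mk.injEq, Prod.mk.injEq] at hx
  exact ⟨x, hx⟩

theorem eq_of_directedOn {D : Set B} (hD : DirectedOn (· ≤ ·) D) {U : B}
    (hDU : ∀ V ∈ D, V ≤ U) (hU : U ≤ sSup D) {x y : F.obj U}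
    (h : ∀ V (hV : V ∈ D), F.res (hDU V hV) x = F.res (hDU V hV) y) : x = y := by
  refine F.res_injective_of_ge (sSup_le hDU) hU ((hF.2.2 D hD).1 ?_)
  simp only [Subtype.mk.injEq, F.res_comp]
  exact funext fun V => h V V.2

theorem exists_res_eq_of_directedOn {D : Set B} (hD : DirectedOn (· ≤ ·) D)
    (f : ∀ V : D, F.obj V) (hf : ∀ V W : D, (h : (V : B) ≤ W) → F.res h (f W) = f V) :
    ∃ x : F.obj (sSup D), ∀ V : D, F.res (le_sSup V.2) x = f V := by
  obtain ⟨x, hx⟩ := (hF.2.2 D hD).2 ⟨f, hf⟩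
  exact ⟨x, congrFun (congrArg Subtype.val hx)⟩

theorem isSeparatedFor {κ : Type*} (b : κ → B) : F.IsSeparatedFor b := by
  classical
  intro U hU x y h
  have hfin : ∀ (t : Finset κ) ⦃W : B⦄ (hWU : W ≤ U), W ≤ t.sup b →
      F.res hWU x = F.res hWU y := by
    intro t
    induction t using Finset.induction_on with
    | empty =>
      intro W hWU hW
      exact (hF.subsingleton_of_le_bot (hW.trans_eq Finset.sup_empty)).elim _ _
    | insert k t _ ih =>
      intro W hWU hW
      rw [Finset.sup_insert] at hW
      refine hF.eq_of_le_sup (inf_le_left : W ⊓ b k ≤ W) (inf_le_left : W ⊓ t.sup b ≤ W)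
        (by rw [← inf_sup_left]; exact le_inf le_rfl hW) ?_ ?_ <;> rw [F.res_comp, F.res_comp]
      exacts [h k _ inf_le_right, ih _ inf_le_right]
  refine hF.eq_of_directedOn (D := Set.range fun t : Finset κ => U ⊓ t.sup b)
    (directedOn_range.2 (Monotone.directed_le fun t t' htt' =>
      inf_le_inf_left U (Finset.sup_mono htt')))
    (by rintro _ ⟨t, rfl⟩; exact inf_le_left) ?_
    (by rintro _ ⟨t, rfl⟩; exact hfin t _ inf_le_right)
  calc U ≤ U ⊓ ⨆ k, b k := le_inf le_rfl hU
    _ = ⨆ k, U ⊓ b k := inf_iSup_eq U b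
    _ ≤ ⨆ t : Finset κ, U ⊓ t.sup b :=
      iSup_le fun k => le_iSup_of_le {k} (by rw [Finset.sup_singleton])

variable {ι : Type*} {a : ι → B} {s : ∀ i, F.obj (a i)} (hs : F.IsMatching s)
include hs

theorem exists_isGluing_finset_sup (t : Finset ι) : ∃ x : F.obj (t.sup a), F.IsGluing s x := by
  classical
  induction t using Finset.induction_on with
  | empty =>
    rw [Finset.sup_empty]
    exact hF.1.1.elim fun x => ⟨x, fun i _ hW _ => (hF.subsingleton_of_le_bot hW).elim _ _⟩
  | insert j t _ ih =>
    obtain ⟨y, hy⟩ := ih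
    rw [Finset.sup_insert]
    obtain ⟨x, hxj, hxt⟩ :=
      hF.exists_res_eq_of_res_eq (s j) y (hy j inf_le_right inf_le_left).symm
    refine ⟨x, fun i W hW hWi => hF.eq_of_le_sup (inf_le_left : W ⊓ a j ≤ W)
      (inf_le_left : W ⊓ t.sup a ≤ W) (by rw [← inf_sup_left]; exact le_inf le_rfl hW)
      ?_ ?_⟩
      <;> rw [F.res_comp, F.res_comp]
    · exact (res_eq_res_of_res_eq hxj inf_le_right _).trans (hs j i _ _)
    · exact (res_eq_res_of_res_eq hxt inf_le_right _).trans (hy i _ _)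

theorem exists_isGluing : ∃ x : F.obj (⨆ i, a i), F.IsGluing s x := by
  classical
  set D := Set.range fun t : Finset ι => t.sup a
  have hex : ∀ V : D, ∃ x : F.obj V, F.IsGluing s x := by
    rintro ⟨_, t, rfl⟩
    exact hF.exists_isGluing_finset_sup hs t
  choose g hg using hex
  have hDa : ∀ V : D, (V : B) ≤ ⨆ i, a i := by
    rintro ⟨_, t, rfl⟩
    exact Finset.sup_le fun i _ => le_iSup a i
  obtain ⟨z, hz⟩ := hF.exists_res_eq_of_directedOn
    (directedOn_range.2 (Monotone.directed_le fun t t' => Finset.sup_mono)) g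
    fun V W hVW => (hF.isSeparatedFor a).eq_of_isGluing (hDa V) ((hg W).res hVW) (hg V)
  have hz : F.IsGluing s z :=
    (hF.isSeparatedFor ((↑) : D → B)).isGluing_of_isGluing_res (sSup_eq_iSup' D).le
      fun V _ hWD hWV => by rw [res_eq_res_of_res_eq (hz V) hWV hWD]; exact (hg V).res hWV
  exact ⟨_, hz.res (iSup_le fun i => le_sSup ⟨{i}, Finset.sup_singleton⟩)⟩

end IsSheaf

variable (F) in
def IsSheafForCovers : Prop :=
  ∀ (I : Type u) (a : I → B) (s : ∀ i, F.obj (a i)), F.IsMatching s →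
    ∀ U, U ≤ ⨆ i, a i → ∃! x : F.obj U, F.IsGluing s x

theorem IsSheaf.isSheafForCovers (hF : F.IsSheaf) : F.IsSheafForCovers := by
  intro I a s hs U hU
  obtain ⟨z, hz⟩ := hF.exists_isGluing hs
  exact ⟨_, hz.res hU, fun y hy => (hF.isSeparatedFor a).eq_of_isGluing hU hy (hz.res hU)⟩

namespace IsSheafForCovers

variable (hF : F.IsSheafForCovers)
include hF

theorem eq_of_res_eq {I : Type u} (a : I → B) {U : B} (ha : ∀ i, a i ≤ U)
    (hU : U ≤ ⨆ i, a i) {x y : F.obj U} (h : ∀ i, F.res (ha i) x = F.res (ha i) y) : x = y :=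
  have hx : F.IsGluing (fun i => F.res (ha i) x) x := isGluing_of_res_eq ha fun _ => rfl
  (hF I a _ (hx.isMatching ha) U hU).unique hx (isGluing_of_res_eq ha fun i => (h i).symm)

theorem exists_res_eq {I : Type u} {a : I → B} {U : B} (ha : ∀ i, a i ≤ U)
    (hU : U ≤ ⨆ i, a i) {s : ∀ i, F.obj (a i)} (hs : F.IsMatching s) :
    ∃ x : F.obj U, ∀ i, F.res (ha i) x = s i :=
  (hF I a s hs U hU).exists.imp fun _ hx _ => hx.res_eq _

theorem subsingleton_of_le_bot {U : B} (hU : U ≤ ⊥) : Subsingleton (F.obj U) :=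
  ⟨fun _ _ => hF.eq_of_res_eq (fun e : PEmpty => e.elim) (fun e => e.elim)
    (hU.trans_eq (iSup_of_empty _).symm) fun e => e.elim⟩

theorem nonempty_bot : Nonempty (F.obj ⊥) :=
  (hF.exists_res_eq (a := fun e : PEmpty => e.elim) (fun e => e.elim) bot_le
    (s := fun e => e.elim) fun e => e.elim).elim fun x _ => ⟨x⟩

theorem carriesDisjointJoinsToProducts : F.CarriesDisjointJoinsToProducts := by
  intro I a hd
  refine ⟨fun x y hxy => hF.eq_of_res_eq a (le_iSup a) le_rfl (congrFun hxy), fun s => ?_⟩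
  have hs : F.IsMatching s := by
    intro i j W hi hj
    obtain rfl | hij := eq_or_ne i j
    · rfl
    · exact (hF.subsingleton_of_le_bot ((le_inf hi hj).trans_eq (hd hij))).elim _ _
  obtain ⟨x, hx⟩ := hF.exists_res_eq (le_iSup a) le_rfl hs
  exact ⟨x, funext hx⟩

theorem bijective_res_sup (V V' : B) : Bijective
    (fun x : F.obj (V ⊔ V') =>
      (⟨(F.res le_sup_left x, F.res le_sup_right x), by rw [F.res_comp, F.res_comp]⟩ :
        {p : F.obj V × F.obj V' // F.res inf_le_left p.1 = F.res inf_le_right p.2})) := by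
  let a : ULift.{u} Bool → B := fun b => cond b.down V V'
  have ha : ∀ b, a b ≤ V ⊔ V' := by rintro ⟨_ | _⟩ <;> simp [a]
  have hU : V ⊔ V' ≤ ⨆ b, a b := sup_le (le_iSup a ⟨true⟩) (le_iSup a ⟨false⟩)
  refine ⟨fun x y hxy => hF.eq_of_res_eq a ha hU ?_, fun ⟨(u, u'), huu'⟩ => ?_⟩
  · simp only [Subtype.mk.injEq, Prod.mk.injEq] at hxy
    rintro ⟨_ | _⟩
    exacts [hxy.2, hxy.1]
  · let s : ∀ b, F.obj (a b) := fun ⟨b⟩ => b.rec u' u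
    have key : ∀ ⦃W⦄ (h : W ≤ V) (h' : W ≤ V'), F.res h u = F.res h' u' := fun W h h' =>
      (res_eq_res_of_res_eq huu' (le_inf h h') h).trans (F.res_comp _ _ _)
    have hs : F.IsMatching s := by
      rintro ⟨_ | _⟩ ⟨_ | _⟩ W hi hj
      exacts [rfl, (key hj hi).symm, key hi hj, rfl]
    obtain ⟨x, hx⟩ := hF.exists_res_eq ha hU hs
    exact ⟨x, Subtype.ext (Prod.ext (hx ⟨true⟩) (hx ⟨false⟩))⟩

theorem bijective_res_sSup {D : Set B} (hD : DirectedOn (· ≤ ·) D) : Bijective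
    (fun x : F.obj (sSup D) =>
      (⟨fun V : D => F.res (le_sSup V.2) x, by intro V W h; rw [F.res_comp]⟩ :
        {f : ∀ V : D, F.obj V //
          ∀ (V W : D) (h : (V : B) ≤ (W : B)), F.res h (f W) = f V})) := by
  have hU : sSup D ≤ ⨆ V : D, (V : B) := (sSup_eq_iSup' D).le
  refine ⟨fun x y hxy => hF.eq_of_res_eq _ (fun V => le_sSup V.2) hU
    (congrFun (congrArg Subtype.val hxy)), fun ⟨f, hf⟩ => ?_⟩
  have hs : F.IsMatching f := by
    intro V V' W hV hV'
    obtain ⟨Z, hZ, hVZ, hV'Z⟩ := hD V V.2 V' V'.2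
    rw [← hf V ⟨Z, hZ⟩ hVZ, ← hf V' ⟨Z, hZ⟩ hV'Z, F.res_comp, F.res_comp]
  obtain ⟨x, hx⟩ := hF.exists_res_eq (fun V => le_sSup V.2) hU hs
  exact ⟨x, Subtype.ext (funext hx)⟩

theorem isSheaf : F.IsSheaf :=
  ⟨⟨hF.nonempty_bot, hF.subsingleton_of_le_bot le_rfl⟩, hF.bijective_res_sup,
    fun _ hD => hF.bijective_res_sSup hD⟩

end IsSheafForCovers

namespace CarriesDisjointJoinsToProducts

variable (H : F.CarriesDisjointJoinsToProducts)
include H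

theorem eq_of_res_eq {I : Type u} {a : I → B} (hd : Pairwise (Disjoint on a)) {U : B}
    (ha : ∀ i, a i ≤ U) (hU : U ≤ ⨆ i, a i) {x y : F.obj U}
    (h : ∀ i, F.res (ha i) x = F.res (ha i) y) : x = y := by
  refine F.res_injective_of_ge (iSup_le ha) hU
    ((H I a fun _ _ hij => (hd hij).eq_bot).1 (funext fun i => ?_))
  simp only [F.res_comp]
  exact h i

theorem isSeparatedFor_of_pairwise_disjoint {I : Type u} {b : I → B}
    (hd : Pairwise (Disjoint on b)) : F.IsSeparatedFor b := by
  intro U hU x y h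
  refine H.eq_of_res_eq (a := fun i => U ⊓ b i)
    (fun _ _ hij => (hd hij).mono inf_le_right inf_le_right) (fun _ => inf_le_left) ?_
    fun i => h i _ inf_le_right
  calc U ≤ U ⊓ ⨆ i, b i := le_inf le_rfl hU
    _ = ⨆ i, U ⊓ b i := inf_iSup_eq U b

theorem isSeparatedFor {I : Type u} (a : I → B) : F.IsSeparatedFor a :=
  (H.isSeparatedFor_of_pairwise_disjoint (pairwise_disjoint_disjointedBy WellOrderingRel a)).mono
    (disjointedBy_le _ a) (iSup_disjointedBy _ a).ge

theorem isSheafForCovers : F.IsSheafForCovers := by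
  intro I a s hs U hU
  set b := disjointedBy WellOrderingRel a
  have hd : Pairwise (Disjoint on b) := pairwise_disjoint_disjointedBy _ a
  obtain ⟨z, hz⟩ := (H I b fun _ _ hij => (hd hij).eq_bot).2
    fun i => F.res (disjointedBy_le _ a i) (s i)
  have hz : F.IsGluing s z :=
    (H.isSeparatedFor_of_pairwise_disjoint hd).isGluing_of_isGluing_res le_rfl
      fun i _ hWU hWb => by
        rw [res_eq_res_of_res_eq (congrFun hz i) hWb hWU, F.res_comp]
        exact (hs.isGluing i).res _
  have hU' : U ≤ ⨆ i, b i := hU.trans (iSup_disjointedBy _ a).ge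
  exact ⟨_, hz.res hU', fun y hy => (H.isSeparatedFor a).eq_of_isGluing hU hy (hz.res hU')⟩

end CarriesDisjointJoinsToProducts

variable (F) in
theorem isSheaf_iff_isSheafForCovers : F.IsSheaf ↔ F.IsSheafForCovers :=
  ⟨IsSheaf.isSheafForCovers, IsSheafForCovers.isSheaf⟩

variable (F) in
theorem isSheafForCovers_iff_carriesDisjointJoinsToProducts :
    F.IsSheafForCovers ↔ F.CarriesDisjointJoinsToProducts :=
  ⟨IsSheafForCovers.carriesDisjointJoinsToProducts,
    CarriesDisjointJoinsToProducts.isSheafForCovers⟩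

end SetPresheaf

/-- A set-valued presheaf on a complete Boolean algebra is a sheaf if and only if
it carries disjoint joins to products. -/
theorem setPresheaf_isSheaf_iff_carriesDisjointJoins
    {B : Type u} [CompleteBooleanAlgebra B] (F : SetPresheaf.{u, v} B) :
    F.IsSheaf ↔ F.CarriesDisjointJoinsToProducts :=
  F.isSheaf_iff_isSheafForCovers.trans F.isSheafForCovers_iff_carriesDisjointJoinsToProducts
end

section
/- On a Boolean locale, sheaf conditions combine: a presheaf valued in a category with limits satisfying (a) F(⊥) terminal and (b) F(V ⊔ V') → F(V) × F(V') an isomorphism for all disjoint V, V', automatically satisfies the binary gluing condition: for arbitrary V, V', the square F(V ⊔ V') → F(V), F(V') → F(V ⊓ V') is a pullback. -/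
/-!
Write `W = V \ V'`. Since `V ⊔ V' = W ⊔ V'` and `V = W ⊔ (V ⊓ V')` are disjoint joins, the
squares `F(V ⊔ V') → F(W), F(V') → F(⊥)` and `F(V) → F(W), F(V ⊓ V') → F(⊥)` are products over
the terminal object `F(⊥)`, hence pullbacks. The first is the horizontal pasting of the square in
question with the second, so the square in question is a pullback by the pasting lemma.
-/

open CategoryTheory CategoryTheory.Limits Opposite

namespace CategoryTheory

variable {C : Type*} [Category C]

theorem IsPullback.of_isIso_prod_lift {P X Y Z : C} {fst : P ⟶ X} {snd : P ⟶ Y}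
    [HasBinaryProduct X Y] [IsIso (prod.lift fst snd)] (t : IsTerminal Z) (f : X ⟶ Z)
    (g : Y ⟶ Z) : IsPullback fst snd f g := by
  obtain ⟨hfan⟩ : Nonempty (IsLimit (BinaryFan.mk fst snd)) :=
    (IsLimit.nonempty_isLimit_iff_isIso_lift (limit.isLimit _)).2 ‹_›
  rw [t.hom_ext f (t.from X), t.hom_ext g (t.from Y)]
  exact IsPullback.of_is_product' hfan t

variable {B : Type*} [Lattice B] (F : Bᵒᵖ ⥤ C)

theorem Functor.map_homOfLE_op_comp {a b c : B} (hab : a ≤ b) (hbc : b ≤ c) :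
    F.map (homOfLE hbc).op ≫ F.map (homOfLE hab).op = F.map (homOfLE (hab.trans hbc)).op := by
  rw [← F.map_comp]
  rfl

theorem Functor.isPullback_map_homOfLE_of_sup_eq [OrderBot B] (hbot : IsTerminal (F.obj (op ⊥)))
    {U W X : B} (hW : W ≤ U) (hX : X ≤ U) (hU : W ⊔ X = U)
    [HasBinaryProduct (F.obj (op W)) (F.obj (op X))]
    (hprod : IsIso (prod.lift (F.map (homOfLE (le_sup_left : W ≤ W ⊔ X)).op)
      (F.map (homOfLE (le_sup_right : X ≤ W ⊔ X)).op))) :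
    IsPullback (F.map (homOfLE hW).op) (F.map (homOfLE hX).op)
      (F.map (homOfLE (bot_le : ⊥ ≤ W)).op) (F.map (homOfLE (bot_le : ⊥ ≤ X)).op) := by
  subst hU
  exact IsPullback.of_isIso_prod_lift hbot _ _

end CategoryTheory

/-- On a Boolean algebra, a presheaf valued in a category with finite limits whose
value at `⊥` is terminal and which sends disjoint binary joins to products
automatically satisfies the binary gluing condition: every square
`F(V ⊔ V') → F(V), F(V') → F(V ⊓ V')` is a pullback. -/
theorem boolean_presheaf_gluing {B : Type*} [BooleanAlgebra B]
    {C : Type*} [Category C] [HasFiniteLimits C]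
    (F : Bᵒᵖ ⥤ C)
    (hbot : Nonempty (IsTerminal (F.obj (op (⊥ : B)))))
    (hdisj : ∀ V V' : B, V ⊓ V' = ⊥ →
      IsIso (prod.lift (F.map (homOfLE (le_sup_left : V ≤ V ⊔ V')).op)
                       (F.map (homOfLE (le_sup_right : V' ≤ V ⊔ V')).op))) :
    ∀ V V' : B,
      IsPullback
        (F.map (homOfLE (le_sup_left : V ≤ V ⊔ V')).op)
        (F.map (homOfLE (le_sup_right : V' ≤ V ⊔ V')).op)
        (F.map (homOfLE (inf_le_left : V ⊓ V' ≤ V)).op)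
        (F.map (homOfLE (inf_le_right : V ⊓ V' ≤ V')).op) := by
  intro V V'
  obtain ⟨t⟩ := hbot
  have hWV : V \ V' ≤ V := sdiff_le
  have outer := F.isPullback_map_homOfLE_of_sup_eq t (hWV.trans le_sup_left) le_sup_right
    (sdiff_sup_self V' V) (hdisj _ _ inf_sdiff_self_left)
  have right := F.isPullback_map_homOfLE_of_sup_eq t hWV inf_le_left
    (sup_sdiff_inf V V') (hdisj _ _ (inf_sdiff_inf V V'))
  rw [← F.map_homOfLE_op_comp hWV le_sup_left,
    ← F.map_homOfLE_op_comp (bot_le : ⊥ ≤ V ⊓ V') inf_le_right] at outer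
  exact outer.of_right (by rw [F.map_homOfLE_op_comp, F.map_homOfLE_op_comp]) right
end

section
/- Every sub-sheaf-of-k-modules of the constant sheaf k on a topological space X, for a field k, is the extension by zero of k from a unique open subset U ⊆ X. -/
open TopologicalSpace

universe u v

variable {X : Type u} [TopologicalSpace X] {k : Type v} [Field k]

/-- Restriction of a locally constant function (a section of the constant sheaf)
along an inclusion of open sets. -/
def resLC {U V : Opens X} (h : V ≤ U) (f : LocallyConstant U k) :
    LocallyConstant V k :=
  f.comap ⟨Set.inclusion h, continuous_inclusion h⟩

/-- A subsheaf of `k`-vector spaces of the constant sheaf `k_X` on a topological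
space `X`: a submodule of locally constant functions on each open, closed under
restriction, and satisfying the gluing (sheaf) condition. -/
structure ConstSubsheaf (X : Type u) [TopologicalSpace X] (k : Type v) [Field k] where
  S : ∀ U : Opens X, Submodule k (LocallyConstant U k)
  res_mem : ∀ {U V : Opens X} (h : V ≤ U), ∀ f ∈ S U, resLC h f ∈ S V
  glue : ∀ {ι : Type u} (U : ι → Opens X) (f : LocallyConstant (iSup U : Opens X) k),
    (∀ i, resLC (le_iSup U i) f ∈ S (U i)) → f ∈ S (iSup U)


lemma resLC_apply {U V : Opens X} (h : V ≤ U) (f : LocallyConstant U k) (x : V) :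
    resLC h f x = f ⟨x, h x.2⟩ := rfl

lemma resLC_resLC {U V W : Opens X} (h1 : V ≤ U) (h2 : W ≤ V) (f : LocallyConstant U k) :
    resLC h2 (resLC h1 f) = resLC (h2.trans h1) f := rfl

lemma resLC_refl {U : Opens X} (h : U ≤ U) (f : LocallyConstant U k) : resLC h f = f := by
  ext x; rfl

/-- Every subsheaf of `k`-vector spaces of the constant sheaf `k_X` is the extension
by zero of the constant sheaf from a unique open `U`: its sections over `V` are
exactly the locally constant functions supported in `U`. -/
theorem constSubsheaf_eq_extension_by_zero (F : ConstSubsheaf X k) :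
    ∃! U : Opens X, ∀ (V : Opens X) (f : LocallyConstant V k),
      f ∈ F.S V ↔ ∀ x : V, f x ≠ 0 → (x : X) ∈ U := by
  classical
  set P : Opens X → Prop := fun W => (LocallyConstant.const W (1 : k)) ∈ F.S W with hP
  set U : Opens X := ⨆ (W : Opens X) (_ : P W), W with hU
  have hWU : ∀ W : Opens X, P W → W ≤ U := fun W hW => le_iSup₂ (f := fun W _ => W) W hW
  have key : ∀ (V : Opens X) (f : LocallyConstant V k),
      f ∈ F.S V ↔ ∀ x : V, f x ≠ 0 → (x : X) ∈ U := by
    intro V f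
    constructor
    · intro hf x hx
      -- the fiber of f through x, as an open subset of X
      set s : Set V := {y : V | f y = f x} with hs
      have hso : IsOpen s := f.isLocallyConstant.isOpen_fiber (f x)
      set W : Opens X := ⟨Subtype.val '' s, V.isOpen.isOpenMap_subtype_val _ hso⟩ with hW
      have hWV : W ≤ V := by
        rintro y ⟨z, hz, rfl⟩; exact z.2
      have hres : resLC hWV f = LocallyConstant.const W (f x) := by
        ext y
        obtain ⟨z, hz, hzy⟩ := y.2
        have : (⟨(y : X), hWV y.2⟩ : V) = z := Subtype.ext hzy.symm
        simp only [resLC_apply, this, LocallyConstant.coe_const, Function.const_apply]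
        exact hz
      have h1 : P W := by
        have hmem : resLC hWV f ∈ F.S W := F.res_mem hWV f hf
        have hsm : (f x)⁻¹ • resLC hWV f ∈ F.S W := Submodule.smul_mem _ _ hmem
        have : (f x)⁻¹ • resLC hWV f = LocallyConstant.const W (1 : k) := by
          rw [hres]; ext y
          simp [inv_mul_cancel₀ hx]
        rwa [this] at hsm
      have hxW : (x : X) ∈ W := ⟨x, rfl, rfl⟩
      exact hWU W h1 hxW
    · intro hsupp
      -- cover V by opens on which f is constant
      have hmem : ∀ i : V, f i ≠ 0 → ∃ W : Opens X, P W ∧ (i : X) ∈ W := by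
        intro i hi
        have := hsupp i hi
        rw [hU] at this
        simpa [Opens.mem_iSup] using this
      set Wc : V → Opens X := fun i =>
        if h : f i = 0 then ⊤ else (hmem i h).choose with hWc
      have hWcP : ∀ i : V, f i ≠ 0 → P (Wc i) ∧ (i : X) ∈ Wc i := by
        intro i hi
        simp only [hWc, dif_neg hi]
        exact ⟨(hmem i hi).choose_spec.1, (hmem i hi).choose_spec.2⟩
      set W1 : V → Opens X := fun i =>
        ⟨Subtype.val '' {y : V | f y = f i},
          V.isOpen.isOpenMap_subtype_val _ (f.isLocallyConstant.isOpen_fiber (f i))⟩ with hW1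
      set Uc : V → Opens X := fun i => W1 i ⊓ Wc i with hUc
      have hUcV : ∀ i, Uc i ≤ V := by
        intro i
        refine inf_le_left.trans ?_
        rintro y ⟨z, hz, rfl⟩; exact z.2
      have hsup : iSup Uc = V := by
        apply le_antisymm (iSup_le hUcV)
        intro x hx
        have hx1 : x ∈ Uc ⟨x, hx⟩ := by
          constructor
          · exact ⟨⟨x, hx⟩, rfl, rfl⟩
          · by_cases h : f ⟨x, hx⟩ = 0
            · simp [hUc, hWc, dif_pos h]
            · exact (hWcP ⟨x, hx⟩ h).2
        exact le_iSup Uc ⟨x, hx⟩ hx1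
      set g : LocallyConstant (iSup Uc : Opens X) k := resLC hsup.le f with hg
      -- value of g on each piece
      have hval : ∀ (i : V) (y : (Uc i : Opens X)), resLC (le_iSup Uc i) g y = f i := by
        intro i y
        obtain ⟨z, hz, hzy⟩ := y.2.1
        have heq : (⟨(y : X), hUcV i y.2⟩ : V) = z := Subtype.ext hzy.symm
        show f ⟨(y : X), _⟩ = f i
        rw [heq]; exact hz
      have hglue : ∀ i : V, resLC (le_iSup Uc i) g ∈ F.S (Uc i) := by
        intro i
        by_cases h : f i = 0
        · have : resLC (le_iSup Uc i) g = 0 := by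
            ext y; rw [hval i y, h]; rfl
          rw [this]; exact Submodule.zero_mem _
        · have h1 : resLC (inf_le_right : Uc i ≤ Wc i) (LocallyConstant.const (Wc i) (1 : k))
              ∈ F.S (Uc i) :=
            F.res_mem inf_le_right _ (hWcP i h).1
          have h2 : f i • resLC (inf_le_right : Uc i ≤ Wc i)
              (LocallyConstant.const (Wc i) (1 : k)) ∈ F.S (Uc i) :=
            Submodule.smul_mem _ _ h1
          have h3 : resLC (le_iSup Uc i) g = f i • resLC (inf_le_right : Uc i ≤ Wc i)
              (LocallyConstant.const (Wc i) (1 : k)) := by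
            ext y
            rw [hval i y]
            show f i = f i * 1
            rw [mul_one]
          rw [h3]; exact h2
      have hgin : g ∈ F.S (iSup Uc) := F.glue Uc g hglue
      have hback : resLC hsup.ge g ∈ F.S V := F.res_mem hsup.ge g hgin
      have : resLC hsup.ge g = f := by
        rw [hg, resLC_resLC, resLC_refl]
      rwa [this] at hback
  refine ⟨U, key, ?_⟩
  intro U' hU'
  apply le_antisymm
  · -- U' ≤ U
    have h1 : (LocallyConstant.const U' (1 : k)) ∈ F.S U' :=
      (hU' U' _).2 (fun x _ => x.2)
    have h2 := (key U' _).1 h1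
    intro x hx
    exact h2 ⟨x, hx⟩ one_ne_zero
  · -- U ≤ U'
    have h1 : (LocallyConstant.const U (1 : k)) ∈ F.S U :=
      (key U _).2 (fun x _ => x.2)
    have h2 := (hU' U _).1 h1
    intro x hx
    exact h2 ⟨x, hx⟩ one_ne_zero
end
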